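/- Let g : ℝ → ℂ be of bounded variation. Then for every x ∈ ℝ, the one-sided limits Mg(x⁻) and Mg(x⁺) of the centered maximal function exist and Mg(x) = min{Mg(x⁻), Mg(x⁺)}. -/

import Mathlib

/-!
Let `h = ‖g‖`. It has bounded variation, hence is bounded, interval integrable and has
one-sided limits `L`, `R` at `x`. The maximal function `Mh` is lower semicontinuous, being a
supremum of continuous averages, and `(L + R) / 2 ≤ Mh x` by averaging over small radii.
For `y` slightly right of `x`, an average of radius `r` is at most `(1 + |y - x| / r) * Mh x`
when `r` is not small, and when `r` is small at most half of `(y - r, y + r)` lies left of `x`,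
so the average is at most `max R ((L + R) / 2) + ε ≤ max (Mh x) R + ε`; small intervals right
of `x` give averages near `R`. Hence `Mh y → max (Mh x) R` as `y → x⁺`, by reflection
`Mh y → max (Mh x) L` as `y → x⁻`, and the minimum of the two is `Mh x` because
`min L R ≤ (L + R) / 2 ≤ Mh x`.
-/

open MeasureTheory Filter Topology

/-- Total variation over ℝ. -/
noncomputable def totalVar (g : ℝ → ℂ) : ENNReal :=
  ⨆ φ : {φ : ℤ → ℝ // Monotone φ},
    ∑' m : ℤ, ENNReal.ofReal ‖g (φ.1 (m + 1)) - g (φ.1 m)‖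

/-- The centered Hardy–Littlewood maximal operator on ℝ. -/
noncomputable def cHL (g : ℝ → ℂ) (x : ℝ) : ℝ :=
  ⨆ r : {r : ℝ // 0 < r}, (1 / (2 * r.1)) * ∫ t in (x - r.1)..(x + r.1), ‖g t‖

open Set

noncomputable def centeredAverage (h : ℝ → ℝ) (x r : ℝ) : ℝ :=
  1 / (2 * r) * ∫ t in (x - r)..(x + r), h t

noncomputable def centeredMaximal (h : ℝ → ℝ) (x : ℝ) : ℝ :=
  ⨆ r : {r : ℝ // 0 < r}, centeredAverage h x r

section CenteredMaximal

variable {h : ℝ → ℝ} {a b x y r A B C K L R : ℝ}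

lemma integral_le_mul_of_le_on_Ioo (hab : a ≤ b) (hi : IntervalIntegrable h volume a b)
    (hK : ∀ t ∈ Ioo a b, h t ≤ K) : ∫ t in a..b, h t ≤ (b - a) * K := by
  simpa using intervalIntegral.integral_mono_on_of_le_Ioo hab hi intervalIntegrable_const hK

lemma mul_le_integral_of_le_on_Ioo (hab : a ≤ b) (hi : IntervalIntegrable h volume a b)
    (hK : ∀ t ∈ Ioo a b, K ≤ h t) : (b - a) * K ≤ ∫ t in a..b, h t := by
  simpa using intervalIntegral.integral_mono_on_of_le_Ioo hab intervalIntegrable_const hi hK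

lemma centeredAverage_nonneg (h0 : ∀ t, 0 ≤ h t) (hr : 0 < r) : 0 ≤ centeredAverage h x r :=
  mul_nonneg (by positivity) (intervalIntegral.integral_nonneg (by linarith) fun t _ => h0 t)

lemma centeredAverage_le (hint : ∀ a b, IntervalIntegrable h volume a b) (hC : ∀ t, h t ≤ C)
    (hr : 0 < r) : centeredAverage h x r ≤ C := by
  have := integral_le_mul_of_le_on_Ioo (by linarith) (hint (x - r) (x + r)) fun t _ => hC t
  calc centeredAverage h x r ≤ 1 / (2 * r) * ((x + r - (x - r)) * C) :=
        mul_le_mul_of_nonneg_left this (by positivity)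
    _ = C := by field_simp; ring

lemma bddAbove_range_centeredAverage (hint : ∀ a b, IntervalIntegrable h volume a b)
    (hC : ∀ t, h t ≤ C) (x : ℝ) :
    BddAbove (range fun r : {r : ℝ // 0 < r} => centeredAverage h x r) :=
  ⟨C, forall_mem_range.2 fun r => centeredAverage_le hint hC r.2⟩

lemma centeredAverage_le_centeredMaximal (hint : ∀ a b, IntervalIntegrable h volume a b)
    (hC : ∀ t, h t ≤ C) (hr : 0 < r) : centeredAverage h x r ≤ centeredMaximal h x :=
  le_ciSup (f := fun r : {r : ℝ // 0 < r} => centeredAverage h x r)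
    (bddAbove_range_centeredAverage hint hC x) ⟨r, hr⟩

lemma centeredMaximal_le (hK : ∀ r, 0 < r → centeredAverage h x r ≤ K) :
    centeredMaximal h x ≤ K :=
  have : Nonempty {r : ℝ // 0 < r} := ⟨⟨1, one_pos⟩⟩
  ciSup_le fun r => hK r r.2

lemma centeredMaximal_nonneg (hint : ∀ a b, IntervalIntegrable h volume a b)
    (h0 : ∀ t, 0 ≤ h t) (hC : ∀ t, h t ≤ C) : 0 ≤ centeredMaximal h x :=
  (centeredAverage_nonneg h0 one_pos).trans (centeredAverage_le_centeredMaximal hint hC one_pos)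

lemma continuous_centeredAverage (hint : ∀ a b, IntervalIntegrable h volume a b) (r : ℝ) :
    Continuous fun y => centeredAverage h y r := by
  have hF := intervalIntegral.continuous_primitive hint 0
  have : (fun y => centeredAverage h y r) =
      fun y => 1 / (2 * r) * ((∫ t in 0..(y + r), h t) - ∫ t in 0..(y - r), h t) := by
    ext y
    rw [intervalIntegral.integral_interval_sub_left (hint _ _) (hint _ _)]
    rfl
  rw [this]
  fun_prop

lemma lowerSemicontinuous_centeredMaximal (hint : ∀ a b, IntervalIntegrable h volume a b)
    (hC : ∀ t, h t ≤ C) : LowerSemicontinuous (centeredMaximal h) :=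
  lowerSemicontinuous_ciSup (bddAbove_range_centeredAverage hint hC)
    fun r => (continuous_centeredAverage hint r).lowerSemicontinuous

lemma centeredAverage_le_mul_centeredMaximal (hint : ∀ a b, IntervalIntegrable h volume a b)
    (h0 : ∀ t, 0 ≤ h t) (hC : ∀ t, h t ≤ C) (hr : 0 < r) :
    centeredAverage h y r ≤ (1 + |y - x| / r) * centeredMaximal h x := by
  set d := |y - x|
  have hd : -d ≤ y - x ∧ y - x ≤ d := abs_le.1 le_rfl
  have hrd : 0 < r + d := by positivity
  have hmono : ∫ t in (y - r)..(y + r), h t ≤ ∫ t in (x - (r + d))..(x + (r + d)), h t :=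
    intervalIntegral.integral_mono_interval (by linarith) (by linarith) (by linarith)
      (ae_of_all _ h0) (hint _ _)
  calc centeredAverage h y r
      ≤ 1 / (2 * r) * ∫ t in (x - (r + d))..(x + (r + d)), h t :=
        mul_le_mul_of_nonneg_left hmono (by positivity)
    _ = (1 + d / r) * centeredAverage h x (r + d) := by
        unfold centeredAverage; field_simp
    _ ≤ (1 + d / r) * centeredMaximal h x :=
        mul_le_mul_of_nonneg_left (centeredAverage_le_centeredMaximal hint hC hrd) (by positivity)

lemma exists_Ioo_of_eventually_nhdsLT_nhdsGT {p q : ℝ → Prop} (hp : ∀ᶠ t in 𝓝[<] x, p t)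
    (hq : ∀ᶠ t in 𝓝[>] x, q t) :
    ∃ δ > 0, (∀ t ∈ Ioo (x - δ) x, p t) ∧ ∀ t ∈ Ioo x (x + δ), q t := by
  obtain ⟨l, hl, hpl⟩ := mem_nhdsLT_iff_exists_Ioo_subset.1 hp
  obtain ⟨u, hu, hqu⟩ := mem_nhdsGT_iff_exists_Ioo_subset.1 hq
  rw [mem_Iio] at hl
  rw [mem_Ioi] at hu
  refine ⟨min (x - l) (u - x), lt_min (by linarith) (by linarith), fun t ht => hpl ?_,
    fun t ht => hqu ?_⟩
  · exact ⟨by linarith [ht.1, min_le_left (x - l) (u - x)], ht.2⟩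
  · exact ⟨ht.1, by linarith [ht.2, min_le_right (x - l) (u - x)]⟩

lemma midpoint_le_centeredMaximal (hint : ∀ a b, IntervalIntegrable h volume a b)
    (hC : ∀ t, h t ≤ C) (hL : Tendsto h (𝓝[<] x) (𝓝 L)) (hR : Tendsto h (𝓝[>] x) (𝓝 R)) :
    (L + R) / 2 ≤ centeredMaximal h x := by
  refine le_of_forall_pos_le_add fun ε hε => ?_
  obtain ⟨δ, hδ, hleft, hright⟩ := exists_Ioo_of_eventually_nhdsLT_nhdsGT
    (hL.eventually (eventually_gt_nhds (sub_lt_self L hε)))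
    (hR.eventually (eventually_gt_nhds (sub_lt_self R hε)))
  have i1 := mul_le_integral_of_le_on_Ioo (by linarith) (hint (x - δ) x)
    fun t ht => (hleft t ht).le
  have i2 := mul_le_integral_of_le_on_Ioo (by linarith) (hint x (x + δ))
    fun t ht => (hright t ht).le
  have hsplit :=
    intervalIntegral.integral_add_adjacent_intervals (hint (x - δ) x) (hint x (x + δ))
  have havg : (L + R) / 2 - ε ≤ centeredAverage h x δ := by
    unfold centeredAverage
    rw [← hsplit]
    calc (L + R) / 2 - ε
        = 1 / (2 * δ) * ((x - (x - δ)) * (L - ε) + (x + δ - x) * (R - ε)) := by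
          field_simp; ring
      _ ≤ _ := mul_le_mul_of_nonneg_left (add_le_add i1 i2) (by positivity)
  linarith [centeredAverage_le_centeredMaximal hint hC hδ (x := x)]

/-- At most half of the interval lies left of `x`, which caps the weight of `A`. -/
lemma centeredAverage_le_of_le_right (hint : ∀ a b, IntervalIntegrable h volume a b)
    (hxy : x ≤ y) (hr : 0 < r) (hA : ∀ t ∈ Ioo (y - r) x, h t ≤ A)
    (hB : ∀ t ∈ Ioo x (y + r), h t ≤ B) : centeredAverage h y r ≤ max B ((A + B) / 2) := by
  set c := max x (y - r)
  have hxc : x ≤ c := le_max_left _ _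
  have hrc : y - r ≤ c := le_max_right _ _
  have hcy : c ≤ y := max_le hxy (by linarith)
  have i1 := integral_le_mul_of_le_on_Ioo hrc (hint (y - r) c)
    fun t ht => hA t ⟨ht.1, (lt_max_iff.1 ht.2).resolve_right (not_lt.2 ht.1.le)⟩
  have i2 := integral_le_mul_of_le_on_Ioo (by linarith) (hint c (y + r))
    fun t ht => hB t ⟨hxc.trans_lt ht.1, ht.2⟩
  have hsplit :=
    intervalIntegral.integral_add_adjacent_intervals (hint (y - r) c) (hint c (y + r))
  have hweights : (c - (y - r)) * A + (y + r - c) * B ≤ 2 * r * max B ((A + B) / 2) := by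
    rcases le_total A B with hAB | hAB
    · nlinarith [le_max_left B ((A + B) / 2)]
    · nlinarith [le_max_right B ((A + B) / 2)]
  unfold centeredAverage
  rw [← hsplit]
  calc 1 / (2 * r) * ((∫ t in (y - r)..c, h t) + ∫ t in c..(y + r), h t)
      ≤ 1 / (2 * r) * (2 * r * max B ((A + B) / 2)) :=
        mul_le_mul_of_nonneg_left ((add_le_add i1 i2).trans hweights) (by positivity)
    _ = max B ((A + B) / 2) := by field_simp

lemma le_centeredAverage_of_le_on_Ioo (hint : ∀ a b, IntervalIntegrable h volume a b)
    (hr : 0 < r) (hK : ∀ t ∈ Ioo (y - r) (y + r), K ≤ h t) : K ≤ centeredAverage h y r := by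
  have := mul_le_integral_of_le_on_Ioo (by linarith) (hint (y - r) (y + r)) hK
  calc K = 1 / (2 * r) * ((y + r - (y - r)) * K) := by field_simp; ring
    _ ≤ centeredAverage h y r := mul_le_mul_of_nonneg_left this (by positivity)

lemma eventually_lt_centeredMaximal_nhdsGT (hint : ∀ a b, IntervalIntegrable h volume a b)
    (hC : ∀ t, h t ≤ C) (hR : Tendsto h (𝓝[>] x) (𝓝 R)) (hK : K < R) :
    ∀ᶠ y in 𝓝[>] x, K < centeredMaximal h y := by
  obtain ⟨K', hKK', hK'R⟩ := exists_between hK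
  obtain ⟨u, hu, hsub⟩ :=
    mem_nhdsGT_iff_exists_Ioo_subset.1 (hR.eventually (eventually_gt_nhds hK'R))
  rw [mem_Ioi] at hu
  filter_upwards [Ioo_mem_nhdsGT (show x < (x + u) / 2 by linarith)] with y hy
  have hr : 0 < y - x := by linarith [hy.1]
  have := le_centeredAverage_of_le_on_Ioo hint hr fun t ht =>
    (hsub ⟨by linarith [ht.1], by linarith [ht.2, hy.2]⟩ : K' < h t).le
  linarith [centeredAverage_le_centeredMaximal hint hC hr (x := y)]

lemma eventually_centeredMaximal_le_nhdsGT (hint : ∀ a b, IntervalIntegrable h volume a b)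
    (h0 : ∀ t, 0 ≤ h t) (hC : ∀ t, h t ≤ C) (hL : Tendsto h (𝓝[<] x) (𝓝 L))
    (hR : Tendsto h (𝓝[>] x) (𝓝 R)) {ε : ℝ} (hε : 0 < ε) :
    ∀ᶠ y in 𝓝[>] x, centeredMaximal h y ≤ max (centeredMaximal h x) R + ε := by
  set M := centeredMaximal h x
  have hM : 0 ≤ M := centeredMaximal_nonneg hint h0 hC
  have hmid : (L + R) / 2 ≤ M := midpoint_le_centeredMaximal hint hC hL hR
  obtain ⟨δ, hδ, hleft, hright⟩ := exists_Ioo_of_eventually_nhdsLT_nhdsGT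
    (hL.eventually (eventually_lt_nhds (lt_add_of_pos_right L hε)))
    (hR.eventually (eventually_lt_nhds (lt_add_of_pos_right R hε)))
  have hlarge : Tendsto (fun y => (1 + |y - x| / (δ / 2)) * M) (𝓝 x) (𝓝 M) := by
    simpa using ((continuous_id.sub continuous_const).abs.div_const (δ / 2)).const_add 1
      |>.mul continuous_const |>.tendsto x (f := fun y => (1 + |y - x| / (δ / 2)) * M)
  filter_upwards [nhdsWithin_le_nhds (hlarge.eventually_lt_const (lt_add_of_pos_right M hε)),
    Ioo_mem_nhdsGT (show x < x + δ / 2 by linarith)] with y hy hyI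
  refine centeredMaximal_le fun r hr => ?_
  rcases le_or_gt (δ / 2) r with hr_large | hr_small
  · calc centeredAverage h y r ≤ (1 + |y - x| / r) * M :=
          centeredAverage_le_mul_centeredMaximal hint h0 hC hr
      _ ≤ (1 + |y - x| / (δ / 2)) * M := by gcongr
      _ ≤ max M R + ε := by linarith [le_max_left M R]
  · calc centeredAverage h y r ≤ max (R + ε) ((L + ε + (R + ε)) / 2) :=
          centeredAverage_le_of_le_right hint hyI.1.le hr
            (fun t ht => (hleft t ⟨by linarith [ht.1, hyI.1], ht.2⟩).le)
            (fun t ht => (hright t ⟨ht.1, by linarith [ht.2, hyI.2]⟩).le)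
      _ ≤ max M R + ε :=
          max_le (by linarith [le_max_right M R]) (by linarith [le_max_left M R])

theorem tendsto_centeredMaximal_nhdsGT (hint : ∀ a b, IntervalIntegrable h volume a b)
    (h0 : ∀ t, 0 ≤ h t) (hC : ∀ t, h t ≤ C) (hL : Tendsto h (𝓝[<] x) (𝓝 L))
    (hR : Tendsto h (𝓝[>] x) (𝓝 R)) :
    Tendsto (centeredMaximal h) (𝓝[>] x) (𝓝 (max (centeredMaximal h x) R)) := by
  refine tendsto_order.2 ⟨fun a ha => ?_, fun b hb => ?_⟩
  · rcases lt_max_iff.1 ha with ha | ha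
    · exact nhdsWithin_le_nhds (lowerSemicontinuous_centeredMaximal hint hC x a ha)
    · exact eventually_lt_centeredMaximal_nhdsGT hint hC hR ha
  · filter_upwards [eventually_centeredMaximal_le_nhdsGT hint h0 hC hL hR
      (half_pos (sub_pos.2 hb))] with y hy
    linarith

lemma centeredAverage_comp_sub_left (c : ℝ) :
    centeredAverage (fun t => h (c - t)) y r = centeredAverage h (c - y) r := by
  unfold centeredAverage
  rw [intervalIntegral.integral_comp_sub_left (fun t => h t) c]
  ring_nf

lemma centeredMaximal_comp_sub_left (c : ℝ) :
    centeredMaximal (fun t => h (c - t)) y = centeredMaximal h (c - y) := by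
  simp only [centeredMaximal, centeredAverage_comp_sub_left]

theorem tendsto_centeredMaximal_nhdsLT (hint : ∀ a b, IntervalIntegrable h volume a b)
    (h0 : ∀ t, 0 ≤ h t) (hC : ∀ t, h t ≤ C) (hL : Tendsto h (𝓝[<] x) (𝓝 L))
    (hR : Tendsto h (𝓝[>] x) (𝓝 R)) :
    Tendsto (centeredMaximal h) (𝓝[<] x) (𝓝 (max (centeredMaximal h x) L)) := by
  have hx : x + x - x = x := add_sub_cancel_right x x
  have hLR : Tendsto (x + x - ·) (𝓝[<] x) (𝓝[>] x) := by
    have := (map_subLeft_nhdsLT (c := x + x) (a := x)).le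
    rwa [hx] at this
  have hRL : Tendsto (x + x - ·) (𝓝[>] x) (𝓝[<] x) := by
    have := (map_subLeft_nhdsGT (c := x + x) (a := x)).le
    rwa [hx] at this
  have hrefl := tendsto_centeredMaximal_nhdsGT (h := fun t => h (x + x - t))
    (fun a b => by
      simpa only [sub_sub_cancel] using (hint (x + x - a) (x + x - b)).comp_sub_left (x + x))
    (fun t => h0 _) (fun t => hC _) (hR.comp hLR) (hL.comp hRL)
  rw [centeredMaximal_comp_sub_left, hx] at hrefl
  refine (hrefl.comp hLR).congr fun y => ?_
  rw [Function.comp_apply, centeredMaximal_comp_sub_left, sub_sub_cancel]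

end CenteredMaximal

lemma LocallyBoundedVariationOn.intervalIntegrable {f : ℝ → ℝ}
    (hf : LocallyBoundedVariationOn f univ) (a b : ℝ) : IntervalIntegrable f volume a b := by
  obtain ⟨p, q, hp, hq, rfl⟩ := hf.exists_monotoneOn_sub_monotoneOn
  exact (monotoneOn_univ.1 hp).intervalIntegrable.sub (monotoneOn_univ.1 hq).intervalIntegrable

lemma eVariationOn_le_totalVar (g : ℝ → ℂ) : eVariationOn g univ ≤ totalVar g := by
  refine iSup_le fun ⟨n, u, hu, _⟩ => ?_
  set φ : ℤ → ℝ := fun m => u (min m.toNat n)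
  have hφ : Monotone φ := fun a b hab => hu (min_le_min_right n (Int.toNat_le_toNat hab))
  have hsum : ∑ i ∈ Finset.range n, edist (g (u (i + 1))) (g (u i)) =
      ∑ m ∈ (Finset.range n).map Nat.castEmbedding,
        ENNReal.ofReal ‖g (φ (m + 1)) - g (φ m)‖ := by
    rw [Finset.sum_map]
    refine Finset.sum_congr rfl fun i hi => ?_
    have hi : i < n := Finset.mem_range.1 hi
    simp only [φ, Nat.castEmbedding_apply, edist_dist, dist_eq_norm]
    rw [show ((i : ℤ) + 1).toNat = i + 1 by omega, Int.toNat_natCast,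
      min_eq_left hi.le, min_eq_left hi]
  rw [hsum]
  exact (ENNReal.sum_le_tsum _).trans (le_iSup (fun φ : {φ : ℤ → ℝ // Monotone φ} =>
    ∑' m : ℤ, ENNReal.ofReal ‖g (φ.1 (m + 1)) - g (φ.1 m)‖) ⟨φ, hφ⟩)

theorem stmt4_general (g : ℝ → ℂ) (hBV : totalVar g ≠ ⊤)
    (x : ℝ) :
    ∃ l r : ℝ, Tendsto (cHL g) (𝓝[<] x) (𝓝 l) ∧ Tendsto (cHL g) (𝓝[>] x) (𝓝 r) ∧
      cHL g x = min l r := by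
  have hbv : BoundedVariationOn (fun t => ‖g t‖) univ :=
    lipschitzWith_one_norm.comp_boundedVariationOn
      (ne_top_of_le_ne_top hBV (eVariationOn_le_totalVar g))
  have hint := hbv.locallyBoundedVariationOn.intervalIntegrable
  have h0 : ∀ t, 0 ≤ ‖g t‖ := fun t => norm_nonneg _
  have hC : ∀ t, ‖g t‖ ≤ ‖g 0‖ + (eVariationOn (fun t => ‖g t‖) univ).toReal :=
    fun t => by linarith [hbv.sub_le (mem_univ t) (mem_univ 0)]
  obtain ⟨L, hL⟩ : ∃ L, Tendsto (fun t => ‖g t‖) (𝓝[<] x) (𝓝 L) :=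
    ⟨_, hbv.tendsto_leftLim x⟩
  obtain ⟨R, hR⟩ : ∃ R, Tendsto (fun t => ‖g t‖) (𝓝[>] x) (𝓝 R) :=
    ⟨_, hbv.tendsto_rightLim x⟩
  have hcHL : cHL g = centeredMaximal (fun t => ‖g t‖) := rfl
  refine ⟨_, _, hcHL ▸ tendsto_centeredMaximal_nhdsLT hint h0 hC hL hR,
    hcHL ▸ tendsto_centeredMaximal_nhdsGT hint h0 hC hL hR, ?_⟩
  rw [hcHL, ← max_min_distrib_left, eq_comm, max_eq_left_iff]
  linarith [min_le_left L R, min_le_right L R, midpoint_le_centeredMaximal hint hC hL hR]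

theorem stmt4 (g : ℝ → ℂ) (hmeas : Measurable g) (hBV : totalVar g ≠ ⊤)
    (x : ℝ) :
    ∃ l r : ℝ, Tendsto (cHL g) (𝓝[<] x) (𝓝 l) ∧ Tendsto (cHL g) (𝓝[>] x) (𝓝 r) ∧
      cHL g x = min l r :=
  stmt4_general g hBV x
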